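/- Let G be a group acting transitively on a set Z, let z₀ ∈ Z with stabilizer S, and let H be a normal subgroup of G. Then: (i) the rule g • [z] = [g • z] gives a well-defined action of G on the set Z/H of orbits of the restricted H-action on Z; and (ii) there is a bijection e : Z/H → G/(H ⊔ S) (left cosets of the join of H and S) such that e([z₀]) is the coset of the identity and e(g • ω) = g • e(ω) for all g ∈ G and ω ∈ Z/H. -/
import Mathlib

open Pointwise

/-- For a transitive `G`-action on `Z` with basepoint `z₀`
(stabilizer `S`) and a normal subgroup `H ⊴ G`: (i) `g • [z] = [g • z]` is a
well-defined `G`-action on the set `Z/H` of `H`-orbits, and (ii) there is an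
equivariant bijection `e : Z/H → G ⧸ (H ⊔ S)` sending `[z₀]` to the identity
coset. -/
theorem stmt2 {G Z : Type*} [Group G] [MulAction G Z] [MulAction.IsPretransitive G Z]
    (z₀ : Z) (H : Subgroup G) [H.Normal] :
    ∃ smul : G → Quotient (MulAction.orbitRel H Z) → Quotient (MulAction.orbitRel H Z),
      (∀ (g : G) (z : Z),
        smul g (Quotient.mk (MulAction.orbitRel H Z) z)
          = Quotient.mk (MulAction.orbitRel H Z) (g • z)) ∧
      (∀ ω, smul 1 ω = ω) ∧
      (∀ (g h : G) (ω : Quotient (MulAction.orbitRel H Z)),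
        smul (g * h) ω = smul g (smul h ω)) ∧
      ∃ e : Quotient (MulAction.orbitRel H Z) → G ⧸ (H ⊔ MulAction.stabilizer G z₀),
        Function.Bijective e ∧
        e (Quotient.mk (MulAction.orbitRel H Z) z₀) = QuotientGroup.mk (1 : G) ∧
        ∀ (g : G) (ω : Quotient (MulAction.orbitRel H Z)), e (smul g ω) = g • e ω := by
  classical
  set S := MulAction.stabilizer G z₀ with hS
  -- (i) the action is well-defined on orbits
  have key : ∀ (g : G) (z w : Z), (MulAction.orbitRel H Z).r z w →
      (MulAction.orbitRel H Z).r (g • z) (g • w) := by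
    intro g z w hzw
    obtain ⟨⟨h, hh⟩, rfl⟩ := hzw
    refine ⟨⟨g * h * g⁻¹, Subgroup.Normal.conj_mem ‹H.Normal› h hh g⟩, ?_⟩
    show (g * h * g⁻¹) • g • w = g • (h : G) • w
    simp only [← mul_smul]
    congr 1
    group
  set sm : G → Quotient (MulAction.orbitRel H Z) → Quotient (MulAction.orbitRel H Z) :=
    fun g => Quotient.map (fun z => g • z) (key g) with hsm
  have hsm_mk : ∀ (g : G) (z : Z),
      sm g (Quotient.mk (MulAction.orbitRel H Z) z)
        = Quotient.mk (MulAction.orbitRel H Z) (g • z) := fun g z => rfl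
  refine ⟨sm, hsm_mk, ?_, ?_, ?_⟩
  · intro ω
    induction ω using Quotient.ind with
    | _ z => exact congrArg _ (one_smul G z)
  · intro g h ω
    induction ω using Quotient.ind with
    | _ z => exact congrArg _ (mul_smul g h z)
  -- (ii) build the map f : G ⧸ (H ⊔ S) → Z/H  from  g ↦ [g • z₀]
  have fwd : ∀ g g' : G, (QuotientGroup.leftRel (H ⊔ S)).r g g' →
      (MulAction.orbitRel H Z).r (g • z₀) (g' • z₀) := by
    intro g g' hgg'
    rw [QuotientGroup.leftRel_apply] at hgg'
    have : g⁻¹ * g' ∈ ((H : Set G) * (S : Set G)) := by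
      rwa [← Subgroup.normal_mul H S, SetLike.mem_coe]
    obtain ⟨h, hh, s, hs, heq⟩ := this
    refine ⟨⟨g * h⁻¹ * g⁻¹,
      Subgroup.Normal.conj_mem ‹H.Normal› h⁻¹ (inv_mem hh) g⟩, ?_⟩
    show (g * h⁻¹ * g⁻¹) • g' • z₀ = g • z₀
    have hg' : g' = g * (h * s) := by
      have : g * (g⁻¹ * g') = g * (h * s) := by rw [← heq]
      simpa [mul_assoc] using this
    have hsz : s • z₀ = z₀ := hs
    rw [← mul_smul, hg']
    have : g * h⁻¹ * g⁻¹ * (g * (h * s)) = g * s := by group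
    rw [this, mul_smul, hsz]
  set f : G ⧸ (H ⊔ S) → Quotient (MulAction.orbitRel H Z) :=
    Quotient.map' (fun g => g • z₀) fwd with hf
  have hf_mk : ∀ g : G, f (QuotientGroup.mk g)
      = Quotient.mk (MulAction.orbitRel H Z) (g • z₀) := fun g => rfl
  have hinj : Function.Injective f := by
    intro x y
    induction x using Quotient.inductionOn' with
    | h g =>
    induction y using Quotient.inductionOn' with
    | h g' =>
    intro hxy
    have : (MulAction.orbitRel H Z).r (g • z₀) (g' • z₀) := Quotient.exact hxy
    obtain ⟨⟨h, hh⟩, hhz⟩ := this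
    have hhz' : (h : G) • g' • z₀ = g • z₀ := hhz
    have hsmem : g⁻¹ * h * g' ∈ S := by
      show (g⁻¹ * h * g') • z₀ = z₀
      rw [mul_smul, mul_smul, hhz', ← mul_smul, inv_mul_cancel, one_smul]
    apply Quotient.sound'
    rw [QuotientGroup.leftRel_apply]
    have : g⁻¹ * g' ∈ ((H : Set G) * (S : Set G)) := by
      refine ⟨g⁻¹ * h⁻¹ * g, ?_, g⁻¹ * h * g', hsmem, by group⟩
      simpa using Subgroup.Normal.conj_mem ‹H.Normal› h⁻¹ (inv_mem hh) g⁻¹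
    rwa [← Subgroup.normal_mul H S, SetLike.mem_coe] at this
  have hsurj : Function.Surjective f := by
    intro ω
    induction ω using Quotient.ind with
    | _ z =>
      obtain ⟨g, hg⟩ := MulAction.exists_smul_eq G z₀ z
      exact ⟨QuotientGroup.mk g, by rw [hf_mk, hg]⟩
  set ψ : (G ⧸ (H ⊔ S)) ≃ Quotient (MulAction.orbitRel H Z) :=
    Equiv.ofBijective f ⟨hinj, hsurj⟩ with hψ
  have hψ_apply : ∀ x, ψ x = f x := fun x => rfl
  refine ⟨ψ.symm, ψ.symm.bijective, ?_, ?_⟩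
  · rw [Equiv.symm_apply_eq, hψ_apply, hf_mk, one_smul]
  · have hequiv : ∀ (g : G) (x : G ⧸ (H ⊔ S)), ψ (g • x) = sm g (ψ x) := by
      intro g x
      induction x using Quotient.inductionOn' with
      | h a =>
        show f (g • QuotientGroup.mk a) = sm g (f (QuotientGroup.mk a))
        rw [show (g • QuotientGroup.mk a : G ⧸ (H ⊔ S)) = QuotientGroup.mk (g * a) from rfl,
          hf_mk, hf_mk, hsm_mk, mul_smul]
    intro g ω
    rw [Equiv.symm_apply_eq, hequiv, Equiv.apply_symm_apply]
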